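/- arXiv:2208.01227 — 2 statements merged into one kernel-verified Lean document; each statement's English description precedes it below -/
import Mathlib

section
/- Let G = Σ_{i=1}^N w_i g_i g_iᵀ with w_i > 0, g_i = (cos β_i, sin β_i), and suppose w_k > (1/2) Σ_{i=1}^N w_i for some index k. Then ‖G‖²_F ≥ w_k² + (Σ_{i≠k} w_i)², with equality if and only if g_kᵀ g_i = 0 for all i ≠ k. -/
open Matrix Real Finset

noncomputable def gvec (β : ℝ) : Fin 2 → ℝ := ![Real.cos β, Real.sin β]

noncomputable def frobSq (G : Matrix (Fin 2) (Fin 2) ℝ) : ℝ := ∑ i, ∑ j, (G i j) ^ 2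

/-!
Doubling the angles, `‖G‖²_F = ((∑ w)² + A² + B²) / 2`, where `A + iB = ∑ wᵢ e^{2i(βᵢ - β_k)}`.
The dominant term contributes `w_k` to `A` and every other term at least `-wᵢ`, so
`A ≥ w_k - ∑_{i ≠ k} wᵢ > 0`. Hence `A² + B² ≥ (w_k - ∑_{i ≠ k} wᵢ)²`, which is the bound, and
equality forces `cos (2(βᵢ - β_k)) = -1`, i.e. `gᵢ ⟂ g_k`, for every `i ≠ k`.
-/

theorem gvec_dotProduct_gvec (x y : ℝ) : gvec x ⬝ᵥ gvec y = cos (x - y) := by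
  simp [gvec, dotProduct, Fin.sum_univ_two, cos_sub]

theorem cos_two_mul_eq_neg_one_iff (x : ℝ) : cos (2 * x) = -1 ↔ cos x = 0 := by
  rw [cos_two_mul, ← sq_eq_zero_iff]
  constructor <;> intro h <;> linarith

section WeightedSums

variable {ι : Type*}

theorem neg_sum_le_sum_mul {s : Finset ι} {w c : ι → ℝ} (hw : ∀ i ∈ s, 0 ≤ w i)
    (hc : ∀ i ∈ s, -1 ≤ c i) : -∑ i ∈ s, w i ≤ ∑ i ∈ s, w i * c i := by
  rw [← sum_neg_distrib]
  exact sum_le_sum fun i hi ↦ by nlinarith [hw i hi, hc i hi]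

theorem sum_mul_eq_neg_sum_iff {s : Finset ι} {w c : ι → ℝ} (hw : ∀ i ∈ s, 0 < w i)
    (hc : ∀ i ∈ s, -1 ≤ c i) : ∑ i ∈ s, w i * c i = -∑ i ∈ s, w i ↔ ∀ i ∈ s, c i = -1 := by
  rw [← sum_neg_distrib, eq_comm,
    sum_eq_sum_iff_of_le fun i hi ↦ by nlinarith [hw i hi, hc i hi]]
  refine forall₂_congr fun i hi ↦ ?_
  rw [← mul_neg_one, eq_comm, mul_right_inj' (hw i hi).ne']

variable [Fintype ι]

theorem frobSq_sum_smul_vecMulVec_gvec (w β : ι → ℝ) :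
    frobSq (∑ i, w i • vecMulVec (gvec (β i)) (gvec (β i))) =
      ∑ i, ∑ j, w i * w j * cos (β i - β j) ^ 2 := by
  simp only [frobSq, Matrix.sum_apply, Matrix.smul_apply, vecMulVec_apply, smul_eq_mul, sq,
    sum_mul_sum, Fin.sum_univ_two, ← sum_add_distrib]
  refine sum_congr rfl fun i _ ↦ sum_congr rfl fun j _ ↦ ?_
  simp only [gvec, cos_sub, Matrix.cons_val_zero, Matrix.cons_val_one]
  ring

/-- `cos² (βᵢ - βⱼ) = (1 + cos (2(βᵢ - θ)) cos (2(βⱼ - θ)) + sin (2(βᵢ - θ)) sin (2(βⱼ - θ))) / 2`,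
so the double sum splits into three squares. -/
theorem sum_sum_mul_cos_sq_sub (w β : ι → ℝ) (θ : ℝ) :
    ∑ i, ∑ j, w i * w j * cos (β i - β j) ^ 2 =
      ((∑ i, w i) ^ 2 + (∑ i, w i * cos (2 * (β i - θ))) ^ 2 +
        (∑ i, w i * sin (2 * (β i - θ))) ^ 2) / 2 := by
  simp only [sq (∑ i, _ : ℝ), sum_mul_sum, ← sum_add_distrib, sum_div]
  refine sum_congr rfl fun i _ ↦ sum_congr rfl fun j _ ↦ ?_
  have hdouble : cos (2 * (β i - β j)) =
      cos (2 * (β i - θ)) * cos (2 * (β j - θ)) + sin (2 * (β i - θ)) * sin (2 * (β j - θ)) := by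
    rw [← cos_sub]; ring_nf
  rw [cos_sq, hdouble]
  ring

theorem sum_mul_sin_two_mul_sub_eq_zero [DecidableEq ι] {w β : ι → ℝ} {k : ι}
    (h : ∀ i ∈ univ.erase k, cos (2 * (β i - β k)) = -1) :
    ∑ i, w i * sin (2 * (β i - β k)) = 0 := by
  refine sum_eq_zero fun i _ ↦ ?_
  rcases eq_or_ne i k with rfl | hik
  · simp
  · rw [sin_eq_zero_iff_cos_eq.mpr (.inr (h i (mem_erase.mpr ⟨hik, mem_univ i⟩))), mul_zero]

end WeightedSums

theorem frobSq_lower_bound_irregular {N : ℕ} (w β : Fin N → ℝ) (hw : ∀ i, 0 < w i)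
    (k : Fin N) (hk : (1 / 2) * ∑ i, w i < w k) :
    w k ^ 2 + (∑ i ∈ Finset.univ.erase k, w i) ^ 2 ≤
      frobSq (∑ i, w i • vecMulVec (gvec (β i)) (gvec (β i))) ∧
    (frobSq (∑ i, w i • vecMulVec (gvec (β i)) (gvec (β i))) =
        w k ^ 2 + (∑ i ∈ Finset.univ.erase k, w i) ^ 2 ↔
      ∀ i, i ≠ k → gvec (β k) ⬝ᵥ gvec (β i) = 0) := by
  set s := ∑ i ∈ univ.erase k, w i
  set R := ∑ i ∈ univ.erase k, w i * cos (2 * (β i - β k))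
  set B := ∑ i, w i * sin (2 * (β i - β k))
  have htotal : ∑ i, w i = w k + s := (add_sum_erase _ w (mem_univ k)).symm
  have hA : ∑ i, w i * cos (2 * (β i - β k)) = w k + R := by
    rw [← add_sum_erase _ _ (mem_univ k), sub_self, mul_zero, cos_zero, mul_one]
  have hfrob : frobSq (∑ i, w i • vecMulVec (gvec (β i)) (gvec (β i))) =
      ((w k + s) ^ 2 + (w k + R) ^ 2 + B ^ 2) / 2 := by
    rw [frobSq_sum_smul_vecMulVec_gvec, sum_sum_mul_cos_sq_sub w β (β k), htotal, hA]
  have hc : ∀ i ∈ univ.erase k, -1 ≤ cos (2 * (β i - β k)) := fun i _ ↦ neg_one_le_cos _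
  have hR : -s ≤ R := neg_sum_le_sum_mul (fun i _ ↦ (hw i).le) hc
  have hs : s < w k := by linarith
  have horth : (∀ i, i ≠ k → gvec (β k) ⬝ᵥ gvec (β i) = 0) ↔
      ∀ i ∈ univ.erase k, cos (2 * (β i - β k)) = -1 := by
    simp only [mem_erase, mem_univ, and_true, gvec_dotProduct_gvec, cos_two_mul_eq_neg_one_iff,
      ← cos_neg (β k - _), neg_sub]
  have hRiff : R = -s ↔ ∀ i ∈ univ.erase k, cos (2 * (β i - β k)) = -1 :=
    sum_mul_eq_neg_sum_iff (fun i _ ↦ hw i) hc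
  rw [horth, ← hRiff, hfrob]
  refine ⟨by nlinarith [sq_nonneg B], fun hEq ↦ by nlinarith [sq_nonneg B], fun hRs ↦ ?_⟩
  have hB : B = 0 := sum_mul_sin_two_mul_sub_eq_zero (hRiff.mp hRs)
  rw [hRs, hB]
  ring
end

section
/- Let F = c Σ_{i=1}^N Σ_{j=1}^{M_i} σ_i^{-2} (r_{i,j}²/d_{i,j}⁴) g_{i,j} g_{i,j}ᵀ with c > 0, σ_i > 0, r_{i,j} ∈ [r₀, R], d_{i,j}² = r_{i,j}² + h_{i,j}², h_{i,j} ≥ h₀ > 0, and g_{i,j} unit vectors in ℝ². Then det(F) ≤ (c²/4)(Σ_{i=1}^N M_i σ_i^{-2})² · (r*)⁴/((r*)² + h₀²)⁴, where r* = max{r₀, h₀}, provided r₀ ≥ h₀ or r₀ ≤ h₀. -/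
open Matrix Real

/-
The Fisher information matrix `F` is a symmetric `2 × 2` matrix, so `det F ≤ (tr F)² / 4`
(AM-GM on the diagonal). Since every `gᵢⱼ` is a unit vector, `tr F` is the total weight
`c Σ σᵢ⁻² rᵢⱼ² / dᵢⱼ⁴`. With `a = h₀²`, the map `x ↦ x / (x + a)²` increases up to `x = a` and
decreases afterwards, so `rᵢⱼ² / dᵢⱼ⁴ ≤ rᵢⱼ² / (rᵢⱼ² + h₀²)²` is maximised over `rᵢⱼ ≥ r₀` at
`rᵢⱼ = max r₀ h₀`.
-/

namespace Matrix

theorem IsSymm.sum {ι α n : Type*} [AddCommMonoid α] {s : Finset ι} {A : ι → Matrix n n α}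
    (hA : ∀ i ∈ s, (A i).IsSymm) : (∑ i ∈ s, A i).IsSymm := by
  rw [IsSymm, transpose_sum]
  exact Finset.sum_congr rfl fun i hi => hA i hi

theorem isSymm_vecMulVec_self {α n : Type*} [CommMagma α] (v : n → α) :
    (vecMulVec v v).IsSymm :=
  transpose_vecMulVec v v

theorem det_fin_two_le_trace_sq_div_four {A : Matrix (Fin 2) (Fin 2) ℝ} (hA : A.IsSymm) :
    A.det ≤ A.trace ^ 2 / 4 := by
  rw [det_fin_two, trace_fin_two, hA.apply 0 1]
  nlinarith [sq_nonneg (A 0 0 - A 1 1), sq_nonneg (A 0 1)]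

end Matrix

theorem trace_vecMulVec_gvec (β : ℝ) : (vecMulVec (gvec β) (gvec β)).trace = 1 := by
  rw [trace_vecMulVec]
  simp [gvec, dotProduct, Fin.sum_univ_two, ← sq]

theorem div_add_sq_le_div_add_self_sq {a x : ℝ} (ha : 0 < a) (hx : 0 ≤ x) :
    x / (x + a) ^ 2 ≤ a / (a + a) ^ 2 := by
  rw [div_le_div_iff₀ (by positivity) (by positivity)]
  nlinarith [mul_nonneg ha.le (sq_nonneg (x - a))]

theorem div_add_sq_le_div_add_sq_of_le_of_le {a x y : ℝ} (ha : 0 < a) (hax : a ≤ x)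
    (hxy : x ≤ y) :
    y / (y + a) ^ 2 ≤ x / (x + a) ^ 2 := by
  have hx : 0 < x := ha.trans_le hax
  rw [div_le_div_iff₀ (by nlinarith) (by nlinarith)]
  have hprod : a ^ 2 ≤ x * y := by nlinarith
  nlinarith [mul_nonneg (sub_nonneg.2 hxy) (sub_nonneg.2 hprod)]

theorem sq_div_sq_add_sq_sq_le {r₀ h₀ r h : ℝ} (hh₀ : 0 < h₀) (hr : r₀ ≤ r) (hh : h₀ ≤ h) :
    r ^ 2 / (r ^ 2 + h ^ 2) ^ 2 ≤ max r₀ h₀ ^ 2 / (max r₀ h₀ ^ 2 + h₀ ^ 2) ^ 2 := by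
  have hdist : r ^ 2 / (r ^ 2 + h ^ 2) ^ 2 ≤ r ^ 2 / (r ^ 2 + h₀ ^ 2) ^ 2 := by gcongr
  refine hdist.trans ?_
  rcases le_total r₀ h₀ with hle | hle
  · rw [max_eq_right hle]
    exact div_add_sq_le_div_add_self_sq (by positivity) (sq_nonneg r)
  · rw [max_eq_left hle]
    exact div_add_sq_le_div_add_sq_of_le_of_le (by positivity) (by gcongr) (by gcongr; linarith)

theorem sum_sum_mul_le {N : ℕ} {M : Fin N → ℕ} {s : Fin N → ℝ} {q : (i : Fin N) → Fin (M i) → ℝ}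
    {K : ℝ} (hs : ∀ i, 0 ≤ s i) (hq : ∀ i j, q i j ≤ K) :
    ∑ i, ∑ j, s i * q i j ≤ (∑ i, (M i : ℝ) * s i) * K := by
  rw [Finset.sum_mul]
  refine Finset.sum_le_sum fun i _ => ?_
  calc ∑ j, s i * q i j ≤ ∑ _j : Fin (M i), s i * K :=
        Finset.sum_le_sum fun j _ => mul_le_mul_of_nonneg_left (hq i j) (hs i)
    _ = (M i : ℝ) * s i * K := by simp [mul_assoc]

theorem fim_det_global_upper_bound_general
    (N : ℕ) (M : Fin N → ℕ) (c r₀ R h₀ : ℝ) (σ : Fin N → ℝ)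
    (r h β : (i : Fin N) → Fin (M i) → ℝ)
    (hh₀ : 0 < h₀)
    (hr : ∀ i j, r i j ∈ Set.Icc r₀ R)
    (hh : ∀ i j, h₀ ≤ h i j) :
    (c • ∑ i : Fin N, ∑ j : Fin (M i),
        ((σ i) ^ (-2 : ℤ) * (r i j) ^ 2 / ((r i j) ^ 2 + (h i j) ^ 2) ^ 2) •
          vecMulVec (gvec (β i j)) (gvec (β i j))).det ≤
      (c ^ 2 / 4) * (∑ i : Fin N, (M i : ℝ) * (σ i) ^ (-2 : ℤ)) ^ 2 *
        (max r₀ h₀) ^ 4 / ((max r₀ h₀) ^ 2 + h₀ ^ 2) ^ 4 := by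
  set q : (i : Fin N) → Fin (M i) → ℝ := fun i j => r i j ^ 2 / (r i j ^ 2 + h i j ^ 2) ^ 2
  set K := max r₀ h₀ ^ 2 / (max r₀ h₀ ^ 2 + h₀ ^ 2) ^ 2
  set T := ∑ i, ∑ j, σ i ^ (-2 : ℤ) * q i j
  set S := ∑ i, (M i : ℝ) * σ i ^ (-2 : ℤ)
  have hσ : ∀ i, 0 ≤ σ i ^ (-2 : ℤ) := fun i => (even_neg.2 even_two).zpow_nonneg _
  have hT0 : 0 ≤ T := Finset.sum_nonneg fun i _ => Finset.sum_nonneg fun j _ =>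
    mul_nonneg (hσ i) (by positivity)
  have hTle : T ≤ S * K :=
    sum_sum_mul_le hσ fun i j => sq_div_sq_add_sq_sq_le hh₀ (hr i j).1 (hh i j)
  have hsymm := (IsSymm.sum (s := Finset.univ) fun i _ => IsSymm.sum (s := Finset.univ) fun j _ =>
    (isSymm_vecMulVec_self (gvec (β i j))).smul
      (σ i ^ (-2 : ℤ) * r i j ^ 2 / (r i j ^ 2 + h i j ^ 2) ^ 2)).smul c
  calc _ ≤ _ := det_fin_two_le_trace_sq_div_four hsymm
    _ = c ^ 2 * T ^ 2 / 4 := by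
      simp only [trace_smul, trace_sum, trace_vecMulVec_gvec, smul_eq_mul, mul_one, mul_div_assoc,
        T, q]
      ring
    _ ≤ c ^ 2 * (S * K) ^ 2 / 4 := by gcongr
    _ = _ := by simp only [K]; rw [mul_pow, div_pow, ← pow_mul, ← pow_mul]; ring

theorem fim_det_global_upper_bound
    (N : ℕ) (M : Fin N → ℕ) (c r₀ R h₀ : ℝ) (σ : Fin N → ℝ)
    (r h β : (i : Fin N) → Fin (M i) → ℝ)
    (hc : 0 < c) (hσ : ∀ i, 0 < σ i) (hr₀ : 0 < r₀) (hh₀ : 0 < h₀)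
    (hr : ∀ i j, r i j ∈ Set.Icc r₀ R)
    (hh : ∀ i j, h₀ ≤ h i j) :
    (c • ∑ i : Fin N, ∑ j : Fin (M i),
        ((σ i) ^ (-2 : ℤ) * (r i j) ^ 2 / ((r i j) ^ 2 + (h i j) ^ 2) ^ 2) •
          vecMulVec (gvec (β i j)) (gvec (β i j))).det ≤
      (c ^ 2 / 4) * (∑ i : Fin N, (M i : ℝ) * (σ i) ^ (-2 : ℤ)) ^ 2 *
        (max r₀ h₀) ^ 4 / ((max r₀ h₀) ^ 2 + h₀ ^ 2) ^ 4 :=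
  fim_det_global_upper_bound_general N M c r₀ R h₀ σ r h β hh₀ hr hh
end
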